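/- Interior propagation of the interface condition, full statement: suppose N, E ⊆ ℝ^{d−1} with N closed, and there exist c₀ ∈ (0,1), c₁ > 0 such that for all y ∈ E and s ∈ (0,1], λ_{d−1}({z ∈ B_s(y) : dist(z, N) > c₀ s}) ≥ c₁ s^{d−1}. Let y ∈ ℝ^{d−1} be a point with ε := dist(y, N) > 0 and suppose there exists y* ∈ E with |y − y*| = ε. Then with ĉ₀ := min{1/4, c₀/2} and ĉ₁ := min{ω_{d−1}/4^{d−1}, c₁/2^{d−1}}, for all s ∈ (0,1]: λ_{d−1}({z ∈ B_s(y) : dist(z, N) > ĉ₀ s}) ≥ ĉ₁ s^{d−1}. -/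

import Mathlib

/-!
If `s ≤ 2ε`, the ball `B_{s/4}(y)` stays at distance more than `ε - s/4 ≥ s/4` from `N`, so it
lies in the set to be measured. If `s > 2ε`, then `B_{s-ε}(y*) ⊆ B_s(y)` and `s - ε ≥ s/2`, so the
hypothesis at `y*` with radius `s - ε` transfers to `y` with both constants halved.
-/

open Metric MeasureTheory Set

section MetricSpace

variable {X : Type*} [PseudoMetricSpace X] {N : Set X} {y y' : X} {c c₀ c₁ s ε : ℝ}

lemma ball_div_four_subset_inter_setOf_lt_infDist (hs : s ≤ 2 * infDist y N) (hc : c ≤ 1 / 4) :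
    ball y (s / 4) ⊆ ball y s ∩ {z | c * s < infDist z N} := by
  intro z hz
  have hyz : dist z y < s / 4 := hz
  have hs₀ : 0 < s := by linarith [dist_nonneg (x := z) (y := y)]
  have hinf : infDist y N ≤ infDist z N + dist y z := infDist_le_infDist_add_dist
  refine ⟨mem_ball.2 (by linarith), ?_⟩
  have : c * s ≤ s / 4 := by nlinarith
  show c * s < infDist z N
  linarith [dist_comm y z]

lemma ball_sub_inter_subset_ball_inter_setOf_lt_infDist (hyy' : dist y y' ≤ ε) (hs : 2 * ε ≤ s)
    (hc₀ : 0 ≤ c₀) (hc : c ≤ c₀ / 2) :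
    ball y' (s - ε) ∩ {z | c₀ * (s - ε) < infDist z N} ⊆ ball y s ∩ {z | c * s < infDist z N} := by
  rintro z ⟨hz, hzN⟩
  have hzy' : dist z y' < s - ε := hz
  have hs₀ : 0 ≤ s := by linarith [dist_nonneg (x := y) (y := y')]
  refine ⟨mem_ball.2 ?_, ?_⟩
  · calc dist z y ≤ dist z y' + dist y' y := dist_triangle _ _ _
      _ < s - ε + ε := by rw [dist_comm y' y]; linarith
      _ = s := by ring
  · calc c * s ≤ c₀ / 2 * s := by gcongr
      _ ≤ c₀ * (s - ε) := by nlinarith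
      _ < infDist z N := hzN

lemma ofReal_div_two_pow_mul_pow_le_of_dist_le [MeasurableSpace X] (μ : Measure X) (d : ℕ)
    (hy' : ENNReal.ofReal (c₁ * (s - ε) ^ d) ≤
      μ (ball y' (s - ε) ∩ {z | c₀ * (s - ε) < infDist z N}))
    (hyy' : dist y y' ≤ ε) (hs : 2 * ε ≤ s) (hc₀ : 0 ≤ c₀) (hc : c ≤ c₀ / 2) (hc₁ : 0 ≤ c₁) :
    ENNReal.ofReal (c₁ / 2 ^ d * s ^ d) ≤ μ (ball y s ∩ {z | c * s < infDist z N}) := by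
  have hs₀ : 0 ≤ s / 2 := by linarith [dist_nonneg (x := y) (y := y')]
  calc ENNReal.ofReal (c₁ / 2 ^ d * s ^ d) = ENNReal.ofReal (c₁ * (s / 2) ^ d) := by
        rw [div_pow, mul_div_assoc', div_mul_eq_mul_div]
    _ ≤ ENNReal.ofReal (c₁ * (s - ε) ^ d) := by gcongr; linarith
    _ ≤ _ := hy'
    _ ≤ _ := measure_mono (ball_sub_inter_subset_ball_inter_setOf_lt_infDist hyy' hs hc₀ hc)

end MetricSpace

section AddHaar

variable {E : Type*} [NormedAddCommGroup E] [NormedSpace ℝ E] [MeasurableSpace E] [BorelSpace E]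
  [FiniteDimensional ℝ E] (μ : Measure E) [μ.IsAddHaarMeasure] {N : Set E} {y : E} {c s : ℝ}

lemma ofReal_div_four_pow_mul_pow_le_addHaar_inter_setOf_lt_infDist (hs₀ : 0 < s)
    (hs : s ≤ 2 * infDist y N) (hc : c ≤ 1 / 4) :
    ENNReal.ofReal ((μ (ball 0 1)).toReal / 4 ^ Module.finrank ℝ E * s ^ Module.finrank ℝ E) ≤
      μ (ball y s ∩ {z | c * s < infDist z N}) := by
  calc ENNReal.ofReal ((μ (ball 0 1)).toReal / 4 ^ Module.finrank ℝ E * s ^ Module.finrank ℝ E)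
      = ENNReal.ofReal ((s / 4) ^ Module.finrank ℝ E) * μ (ball 0 1) := by
        rw [div_pow, ← ENNReal.ofReal_toReal (measure_ball_lt_top (μ := μ)).ne,
          ← ENNReal.ofReal_mul (by positivity), ENNReal.toReal_ofReal ENNReal.toReal_nonneg]
        ring_nf
    _ = μ (ball y (s / 4)) := (μ.addHaar_ball_of_pos y (by positivity)).symm
    _ ≤ _ := measure_mono (ball_div_four_subset_inter_setOf_lt_infDist hs hc)

end AddHaar

theorem stmt10_general {m : ℕ}
    (N E : Set (EuclideanSpace ℝ (Fin m)))
    (c₀ c₁ : ℝ) (hc₀ : 0 < c₀) (hc₁ : 0 < c₁)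
    (hE : ∀ y ∈ E, ∀ s : ℝ, 0 < s → s ≤ 1 →
      ENNReal.ofReal (c₁ * s ^ m) ≤
        volume (ball y s ∩ {z | c₀ * s < infDist z N}))
    (y ystar : EuclideanSpace ℝ (Fin m))
    (hystar : ystar ∈ E)
    (hdist : dist y ystar = infDist y N) :
    ∀ s : ℝ, 0 < s → s ≤ 1 →
      ENNReal.ofReal
          (min ((volume (ball (0 : EuclideanSpace ℝ (Fin m)) 1)).toReal / 4 ^ m)
            (c₁ / 2 ^ m) * s ^ m) ≤
        volume (ball y s ∩ {z | min (1 / 4) (c₀ / 2) * s < infDist z N}) := by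
  intro s hs hs1
  have hfinrank := finrank_euclideanSpace_fin (𝕜 := ℝ) (n := m)
  rcases le_or_gt s (2 * infDist y N) with hsmall | hlarge
  · refine le_trans (ENNReal.ofReal_le_ofReal ?_)
      (hfinrank ▸ ofReal_div_four_pow_mul_pow_le_addHaar_inter_setOf_lt_infDist volume hs hsmall
        (min_le_left _ _))
    gcongr
    exact min_le_left _ _
  · have hε := infDist_nonneg (x := y) (s := N)
    refine le_trans (ENNReal.ofReal_le_ofReal ?_)
      (ofReal_div_two_pow_mul_pow_le_of_dist_le volume m
        (hE ystar hystar (s - infDist y N) (by linarith) (by linarith)) hdist.le hlarge.le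
        hc₀.le (min_le_right _ _) hc₁.le)
    gcongr
    exact min_le_right _ _

theorem stmt10 {m : ℕ} (hm : 1 ≤ m)
    (N E : Set (EuclideanSpace ℝ (Fin m))) (hNcl : IsClosed N) (hN : N.Nonempty)
    (c₀ c₁ : ℝ) (hc₀ : 0 < c₀) (hc₀1 : c₀ < 1) (hc₁ : 0 < c₁)
    (hE : ∀ y ∈ E, ∀ s : ℝ, 0 < s → s ≤ 1 →
      ENNReal.ofReal (c₁ * s ^ m) ≤
        volume (ball y s ∩ {z | c₀ * s < infDist z N}))
    (y ystar : EuclideanSpace ℝ (Fin m))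
    (hε : 0 < infDist y N) (hystar : ystar ∈ E)
    (hdist : dist y ystar = infDist y N) :
    ∀ s : ℝ, 0 < s → s ≤ 1 →
      ENNReal.ofReal
          (min ((volume (ball (0 : EuclideanSpace ℝ (Fin m)) 1)).toReal / 4 ^ m)
            (c₁ / 2 ^ m) * s ^ m) ≤
        volume (ball y s ∩ {z | min (1 / 4) (c₀ / 2) * s < infDist z N}) :=
  stmt10_general N E c₀ c₁ hc₀ hc₁ hE y ystar hystar hdist
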